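/- Let g ≥ 2, let H be a free ℤ-module with symplectic basis x_1,…,x_g,y_1,…,y_g and let L ⊆ H be the Lagrangian submodule spanned by x_1,…,x_g. Let p : Λ³H → Λ³(H/L) be the map induced by the projection H → H/L, and let c : Λ³H → H/L be the composition of the contraction h_1 ∧ h_2 ∧ h_3 ↦ (h_1·h_2)h_3 + (h_2·h_3)h_1 + (h_3·h_1)h_2 with the projection H → H/L. Then the ℤ-linear map p ⊕ c : Λ³H → Λ³(H/L) ⊕ H/L is surjective. -/

import Mathlib

/-! `p` is onto because every wedge of classes in `H/L` lifts to a wedge in `H`. The kernel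
of `p` contains `x_j ∧ y_j ∧ y_m` for `j ≠ m` (possible as `g ≥ 2`), which `c` sends to the
class of `y_m`; these classes generate `H/L`, so `c` maps `ker p` onto `H/L`, and an element
`(a, t)` is hit by any preimage of `a` corrected by an element of `ker p`. -/

open ExteriorAlgebra

/-- The wedge `v 0 ∧ ⋯ ∧ v (n-1)` in the `n`-th exterior power `⋀[ℤ]^n M`. -/
noncomputable def wedge {M : Type*} [AddCommGroup M] [Module ℤ M] (n : ℕ) (v : Fin n → M) :
    ⋀[ℤ]^n M :=
  ⟨ιMulti ℤ n v, ιMulti_range ℤ n (Set.mem_range_self v)⟩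

section Wedge

variable {M N : Type*} [AddCommGroup M] [Module ℤ M] [AddCommGroup N] [Module ℤ N]

lemma wedge_eq_ιMulti (n : ℕ) (v : Fin n → M) : wedge n v = exteriorPower.ιMulti ℤ n v := rfl

lemma wedge_eq_zero_of_apply_eq_zero {n : ℕ} {v : Fin n → M} (i : Fin n) (hi : v i = 0) :
    wedge n v = 0 := by
  rw [wedge_eq_ιMulti]
  exact AlternatingMap.map_coord_zero _ i hi

lemma span_range_wedge (n : ℕ) : Submodule.span ℤ (Set.range (wedge (M := M) n)) = ⊤ := by
  -- `convert` bridges the submodule and `AddCommGroup.toIntModule` ℤ-actions on `⋀[ℤ]^n M`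
  convert exteriorPower.ιMulti_span ℤ n M using 1
  congr!

lemma surjective_of_map_wedge {n : ℕ} (f : M → N) (hf : Function.Surjective f)
    (p : (⋀[ℤ]^n M) →ₗ[ℤ] (⋀[ℤ]^n N)) (hp : ∀ v : Fin n → M, p (wedge n v) = wedge n (f ∘ v)) :
    Function.Surjective p := by
  rw [← LinearMap.range_eq_top, eq_top_iff, ← span_range_wedge, Submodule.span_le]
  rintro _ ⟨v, rfl⟩
  choose u hu using fun i => hf (v i)
  exact ⟨wedge n u, by rw [hp, Function.comp_def, funext hu]⟩

end Wedge

theorem LinearMap.surjective_prod_of_map_ker_eq_top {R M P N : Type*} [Ring R]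
    [AddCommGroup M] [Module R M] [AddCommGroup P] [Module R P] [AddCommGroup N] [Module R N]
    (p : M →ₗ[R] P) (c : M →ₗ[R] N) (hp : Function.Surjective p)
    (hc : (LinearMap.ker p).map c = ⊤) : Function.Surjective (p.prod c) := by
  rintro ⟨a, t⟩
  obtain ⟨x, rfl⟩ := hp a
  obtain ⟨k, hk, hck⟩ := hc.ge (Submodule.mem_top (x := t - c x))
  exact ⟨x + k, by simp [LinearMap.mem_ker.1 hk, hck]⟩

theorem Module.Basis.span_range_map_inr_eq_top {R M Q ι κ : Type*} [Ring R] [AddCommGroup M]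
    [Module R M] [AddCommGroup Q] [Module R Q] (b : Module.Basis (ι ⊕ κ) R M) (π : M →ₗ[R] Q)
    (hπ : Function.Surjective π) (hinl : ∀ i, π (b (Sum.inl i)) = 0) :
    Submodule.span R (Set.range fun k => π (b (Sum.inr k))) = ⊤ := by
  rw [eq_top_iff, ← LinearMap.range_eq_top.2 hπ, LinearMap.range_eq_map, ← b.span_eq,
    Submodule.map_span, Submodule.span_le]
  rintro _ ⟨_, ⟨i | k, rfl⟩, rfl⟩
  · simp [hinl]
  · exact Submodule.subset_span ⟨k, rfl⟩

theorem p_oplus_c_surjective_general (g : ℕ) (hg : 2 ≤ g) (H : Type) [AddCommGroup H] [Module ℤ H]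
    (b : Module.Basis (Fin g ⊕ Fin g) ℤ H)
    (L : Submodule ℤ H)
    (hL : L = Submodule.span ℤ (Set.range fun i : Fin g => b (Sum.inl i)))
    (ω : H →ₗ[ℤ] H →ₗ[ℤ] ℤ)
    (hxy : ∀ i j : Fin g, ω (b (Sum.inl i)) (b (Sum.inr j)) = if i = j then 1 else 0)
    (hyx : ∀ i j : Fin g, ω (b (Sum.inr i)) (b (Sum.inl j)) = if i = j then -1 else 0)
    (p : (⋀[ℤ]^3 H) →ₗ[ℤ] (⋀[ℤ]^3 (H ⧸ L)))
    (hp : ∀ v : Fin 3 → H, p (wedge 3 v) = wedge 3 (⇑L.mkQ ∘ v))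
    (c : (⋀[ℤ]^3 H) →ₗ[ℤ] H ⧸ L)
    (hc : ∀ v : Fin 3 → H, c (wedge 3 v) =
      L.mkQ ((ω (v 0) (v 1)) • v 2 + (ω (v 1) (v 2)) • v 0 + (ω (v 2) (v 0)) • v 1)) :
    Function.Surjective (p.prod c) := by
  have hxQ : ∀ i, (Submodule.Quotient.mk (b (Sum.inl i)) : H ⧸ L) = 0 := fun i =>
    (Submodule.Quotient.mk_eq_zero L).2 (hL ▸ Submodule.subset_span ⟨i, rfl⟩)
  have : Nontrivial (Fin g) := Fin.nontrivial_iff_two_le.2 hg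
  -- makes `Submodule.Quotient.module L` and `AddCommGroup.toIntModule (H ⧸ L)` agree definitionally
  obtain rfl : ‹Module ℤ H› = AddCommGroup.toIntModule H := Subsingleton.elim _ _
  refine p.surjective_prod_of_map_ker_eq_top c
    (surjective_of_map_wedge L.mkQ L.mkQ_surjective p hp) ?_
  rw [eq_top_iff, ← b.span_range_map_inr_eq_top L.mkQ L.mkQ_surjective hxQ, Submodule.span_le]
  rintro _ ⟨m, rfl⟩
  obtain ⟨j, hj⟩ := exists_ne m
  refine ⟨wedge 3 ![b (Sum.inl j), b (Sum.inr j), b (Sum.inr m)], ?_, ?_⟩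
  · rw [SetLike.mem_coe, LinearMap.mem_ker, hp]
    exact wedge_eq_zero_of_apply_eq_zero 0 (hxQ j)
  · simp [hc, hxy, hyx, hj.symm, hxQ]

/-- For `g ≥ 2`: `H` free with symplectic basis `x_1,…,x_g,y_1,…,y_g` for the intersection
pairing `ω`, `L` the Lagrangian spanned by the `x_i`, `p : Λ³H → Λ³(H/L)` induced by the
projection `H → H/L`, and `c : Λ³H → H/L` the contraction
`h₁∧h₂∧h₃ ↦ (h₁·h₂)h₃ + (h₂·h₃)h₁ + (h₃·h₁)h₂` followed by the projection.  Then the map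
`p ⊕ c : Λ³H → Λ³(H/L) ⊕ H/L` is surjective. -/
theorem p_oplus_c_surjective (g : ℕ) (hg : 2 ≤ g) (H : Type) [AddCommGroup H] [Module ℤ H]
    (b : Module.Basis (Fin g ⊕ Fin g) ℤ H)
    (L : Submodule ℤ H)
    (hL : L = Submodule.span ℤ (Set.range fun i : Fin g => b (Sum.inl i)))
    (ω : H →ₗ[ℤ] H →ₗ[ℤ] ℤ)
    (hxx : ∀ i j : Fin g, ω (b (Sum.inl i)) (b (Sum.inl j)) = 0)
    (hyy : ∀ i j : Fin g, ω (b (Sum.inr i)) (b (Sum.inr j)) = 0)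
    (hxy : ∀ i j : Fin g, ω (b (Sum.inl i)) (b (Sum.inr j)) = if i = j then 1 else 0)
    (hyx : ∀ i j : Fin g, ω (b (Sum.inr i)) (b (Sum.inl j)) = if i = j then -1 else 0)
    (p : (⋀[ℤ]^3 H) →ₗ[ℤ] (⋀[ℤ]^3 (H ⧸ L)))
    (hp : ∀ v : Fin 3 → H, p (wedge 3 v) = wedge 3 (⇑L.mkQ ∘ v))
    (c : (⋀[ℤ]^3 H) →ₗ[ℤ] H ⧸ L)
    (hc : ∀ v : Fin 3 → H, c (wedge 3 v) =
      L.mkQ ((ω (v 0) (v 1)) • v 2 + (ω (v 1) (v 2)) • v 0 + (ω (v 2) (v 0)) • v 1)) :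
    Function.Surjective (p.prod c) :=
  p_oplus_c_surjective_general g hg H b L hL ω hxy hyx p hp c hc
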